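/- arXiv:1907.11028 — 2 statements merged into one kernel-verified Lean document; each statement's English description precedes it below -/
import Mathlib

section
/- Assume that R > 0 satisfies max over i=1,…,n and l=0,…,m_i of ( λ_i·f̄_{iR}·K_{il} + Σ_{j=1}^{p_i} η_{ij}·‖γ_{ij}^{(l)}‖_∞·H_{ijR} ) ≤ R. If u ∈ P with ‖u‖ = R and σ > 0 satisfy σ·u = T u, then σ ≤ 1. In particular σ·u ≠ T u for every u ∈ P with ‖u‖ = R and every σ > 1. -/
open Set MeasureTheory

/-- The `Cᵐ[0,1]` norm `max_{0 ≤ j ≤ mi} ‖g⁽ʲ⁾‖_∞` (derivatives within `[0,1]`). -/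
noncomputable def normCm (mi : ℕ) (g : ℝ → ℝ) : ℝ :=
  ⨆ j : Fin (mi + 1), ⨆ t : Set.Icc (0:ℝ) 1, |iteratedDerivWithin j.val g (Set.Icc 0 1) ↑t|

/-- The norm `‖u‖ = max_i ‖u_i‖_{C^{m_i}}` on `∏ᵢ C^{m_i}[0,1]`. -/
noncomputable def normP {n : ℕ} (m : Fin n → ℕ) (u : Fin n → ℝ → ℝ) : ℝ :=
  ⨆ i, normCm (m i) (u i)

/-- Membership in the cone `P = {u ∈ ∏ᵢ C^{m_i}[0,1] : uᵢ ≥ 0 on [0,1]}`. -/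
def memP {n : ℕ} (m : Fin n → ℕ) (u : Fin n → ℝ → ℝ) : Prop :=
  (∀ i, ContDiffOn ℝ (m i) (u i) (Set.Icc 0 1)) ∧
  (∀ i, ∀ t ∈ Set.Icc (0:ℝ) 1, 0 ≤ u i t)

/-- The vector `(u₁(s),…,u₁^{(m₁)}(s),…,u_n(s),…,u_n^{(m_n)}(s))` of values and
derivatives (within `[0,1]`), fed to the nonlinearities. -/
noncomputable def jet {n : ℕ} (m : Fin n → ℕ) (u : Fin n → ℝ → ℝ) (s : ℝ) :
    (j : Fin n) → Fin (m j + 1) → ℝ :=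
  fun j l => iteratedDerivWithin l.val (u j) (Set.Icc 0 1) s

/-- The box `∏ᵢ ([0,ρ] × [−ρ,ρ]^{m_i})`, i.e. the `x`-section of `I_ρ`. -/
def Jset {n : ℕ} (m : Fin n → ℕ) (ρ : ℝ) : Set ((j : Fin n) → Fin (m j + 1) → ℝ) :=
  {x | ∀ j, x j 0 ∈ Set.Icc (0:ℝ) ρ ∧ ∀ l : Fin (m j + 1), l ≠ 0 → x j l ∈ Set.Icc (-ρ) ρ}

/-- The sup norm `‖g‖_∞` on `[0,1]`. -/
noncomputable def supIcc (g : ℝ → ℝ) : ℝ := ⨆ t : Set.Icc (0:ℝ) 1, |g ↑t|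

/-! Differentiating `σ uᵢ = Tᵢ u` up to `mᵢ` times under the integral sign (legitimate because the
top kernel derivative is dominated and jumps only on the diagonal, which is a null set in `s`)
gives `σ uᵢ⁽ˡ⁾ = λᵢ ∫ ∂ˡkᵢ/∂tˡ · fᵢ(s, u) ds + Σⱼ ηᵢⱼ γᵢⱼ⁽ˡ⁾ hᵢⱼ[u]`. On the sphere `‖u‖ = R`
the jet of `u` lies in `I_R`, so each right-hand side is bounded by the growth condition, hence
`σ ‖u‖ ≤ R = ‖u‖`. -/

open Filter Topology

local notation "μ01" => volume.restrict (Icc (0:ℝ) 1)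

lemma abs_sub_le_mul_of_hasDerivAt_Ioo {F F' : ℝ → ℝ} {a b c : ℝ} (hab : a ≤ b)
    (hF : ContinuousOn F (Icc a b)) (hd : ∀ x ∈ Ioo a b, HasDerivAt F (F' x) x)
    (hbound : ∀ x ∈ Ioo a b, |F' x| ≤ c) :
    |F b - F a| ≤ c * (b - a) := by
  rcases hab.eq_or_lt with rfl | hlt
  · simp
  obtain ⟨ξ, hξ, hslope⟩ := exists_hasDerivAt_eq_slope F F' hlt hF hd
  rw [eq_div_iff (sub_pos.2 hlt).ne'] at hslope
  rw [← hslope, abs_mul, abs_of_pos (sub_pos.2 hlt)]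
  exact mul_le_mul_of_nonneg_right (hbound ξ hξ) (sub_pos.2 hlt).le

lemma abs_sub_le_mul_of_hasDerivWithinAt_off_point {F F' : ℝ → ℝ} {a b c s : ℝ}
    (hF : ContinuousOn F (Icc a b))
    (hd : ∀ x ∈ Icc a b, x ≠ s → HasDerivWithinAt F (F' x) (Icc a b) x)
    (hbound : ∀ x ∈ Icc a b, x ≠ s → |F' x| ≤ c) {x y : ℝ} (hx : x ∈ Icc a b)
    (hy : y ∈ Icc a b) : |F y - F x| ≤ c * |y - x| := by
  have piece : ∀ x ∈ Icc a b, ∀ y ∈ Icc a b, x ≤ y → s ∉ Ioo x y →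
      |F y - F x| ≤ c * (y - x) := by
    intro x hx y hy hxy hs
    have hsub : Icc x y ⊆ Icc a b := Icc_subset_Icc hx.1 hy.2
    refine abs_sub_le_mul_of_hasDerivAt_Ioo hxy (hF.mono hsub) (fun z hz => ?_)
      (fun z hz => hbound z (hsub (Ioo_subset_Icc_self hz)) (by rintro rfl; exact hs hz))
    exact (hd z (hsub (Ioo_subset_Icc_self hz)) (by rintro rfl; exact hs hz)).hasDerivAt
      (Icc_mem_nhds (hx.1.trans_lt hz.1) (hz.2.trans_le hy.2))
  have ordered : ∀ x ∈ Icc a b, ∀ y ∈ Icc a b, x ≤ y → |F y - F x| ≤ c * (y - x) := by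
    intro x hx y hy hxy
    by_cases hs : s ∈ Ioo x y
    · have hsI : s ∈ Icc a b := ⟨hx.1.trans hs.1.le, hs.2.le.trans hy.2⟩
      calc |F y - F x| ≤ |F y - F s| + |F s - F x| := abs_sub_le _ _ _
        _ ≤ c * (y - s) + c * (s - x) :=
          add_le_add (piece s hsI y hy hs.2.le (fun h => lt_irrefl _ h.1))
            (piece x hx s hsI hs.1.le (fun h => lt_irrefl _ h.2))
        _ = c * (y - x) := by ring
    · exact piece x hx y hy hxy hs
  rcases le_total x y with hxy | hyx
  · rw [abs_of_nonneg (sub_nonneg.2 hxy)]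
    exact ordered x hx y hy hxy
  · rw [abs_sub_comm, abs_of_nonpos (sub_nonpos.2 hyx), neg_sub]
    exact ordered y hy x hx hyx

lemma ae_forall_abs_le_of_continuousOn_diff {μ : Measure ℝ} {k : ℝ → ℝ → ℝ} {Φ : ℝ → ℝ}
    {a b : ℝ} (hab : a < b)
    (hcont : ∀ᵐ s ∂μ, ContinuousOn (fun t => k t s) (Icc a b \ {s}))
    (hdom : ∀ t ∈ Icc a b, ∀ᵐ s ∂μ, |k t s| ≤ Φ s) :
    ∀ᵐ s ∂μ, ∀ t ∈ Icc a b, t ≠ s → |k t s| ≤ Φ s := by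
  -- off a null set the bound holds at all rational `t`, and continuity carries it to all `t ≠ s`
  set Q : Set ℝ := Icc a b ∩ range ((↑) : ℚ → ℝ)
  have hQ : ∀ᵐ s ∂μ, ∀ t ∈ Q, |k t s| ≤ Φ s :=
    (ae_ball_iff ((countable_range _).mono inter_subset_right)).2 fun t ht => hdom t ht.1
  filter_upwards [hQ, hcont] with s hs hcs t ht hts
  set S : Set ℝ := Ioo a b ∩ (range ((↑) : ℚ → ℝ) \ {s})
  have hclosure : t ∈ closure S := by
    have h1 : Ioo a b ⊆ closure S :=
      (Rat.denseRange_cast.sdiff_singleton s).open_subset_closure_inter isOpen_Ioo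
    rw [← closure_Ioo hab.ne] at ht
    exact closure_minimal h1 isClosed_closure ht
  have : (𝓝[S] t).NeBot := mem_closure_iff_nhdsWithin_neBot.1 hclosure
  have hcw : ContinuousWithinAt (fun τ => k τ s) S t :=
    (hcs t ⟨ht, hts⟩).mono fun x hx => ⟨Ioo_subset_Icc_self hx.1, hx.2.2⟩
  refine le_of_tendsto hcw.abs.tendsto ?_
  filter_upwards [self_mem_nhdsWithin] with τ hτ
  exact hs τ ⟨Ioo_subset_Icc_self hτ.1, hτ.2.1⟩

lemma hasDerivWithinAt_integral_of_lipschitz {α : Type*} [MeasurableSpace α] {μ : Measure α}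
    {K : ℝ → α → ℝ} {K' Ψ : α → ℝ} {S : Set ℝ} {t₀ : ℝ} (ht₀ : t₀ ∈ S)
    (hint : ∀ t ∈ S, Integrable (K t) μ) (hΨ : Integrable Ψ μ)
    (hlip : ∀ᵐ s ∂μ, ∀ t ∈ S, |K t s - K t₀ s| ≤ Ψ s * |t - t₀|)
    (hderiv : ∀ᵐ s ∂μ, HasDerivWithinAt (fun t => K t s) (K' s) S t₀) :
    HasDerivWithinAt (fun t => ∫ s, K t s ∂μ) (∫ s, K' s ∂μ) S t₀ := by
  rw [hasDerivWithinAt_iff_tendsto_slope]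
  have hmem : ∀ᶠ t in 𝓝[S \ {t₀}] t₀, t ∈ S \ {t₀} := self_mem_nhdsWithin
  have hquot : Tendsto (fun t => ∫ s, (K t s - K t₀ s) / (t - t₀) ∂μ)
      (𝓝[S \ {t₀}] t₀) (𝓝 (∫ s, K' s ∂μ)) := by
    refine tendsto_integral_filter_of_dominated_convergence Ψ ?_ ?_ hΨ ?_
    · filter_upwards [hmem] with t ht
      exact (((hint t ht.1).sub (hint t₀ ht₀)).div_const _).aestronglyMeasurable
    · filter_upwards [hmem] with t ht
      filter_upwards [hlip] with s hs
      rw [Real.norm_eq_abs, abs_div, div_le_iff₀ (abs_pos.2 (sub_ne_zero.2 ht.2))]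
      exact hs t ht.1
    · filter_upwards [hderiv] with s hs
      simpa [slope_fun_def_field] using hasDerivWithinAt_iff_tendsto_slope.1 hs
  refine hquot.congr' ?_
  filter_upwards [hmem] with t ht
  rw [slope_def_field, ← integral_sub (hint t ht.1) (hint t₀ ht₀), integral_div]

lemma hasDerivWithinAt_integral_mul_of_hasDerivWithinAt_off_diag {μ : Measure ℝ}
    [NullSingletonClass μ] {K₀ K₁ : ℝ → ℝ → ℝ} {Φ g : ℝ → ℝ} {a b C t₀ : ℝ} (hab : a < b)
    (ht₀ : t₀ ∈ Icc a b) (hK₀ : ∀ t ∈ Icc a b, Integrable (K₀ t) μ)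
    (hK₀_cont : ∀ᵐ s ∂μ, ContinuousOn (fun t => K₀ t s) (Icc a b))
    (hK₁_cont : ∀ᵐ s ∂μ, ContinuousOn (fun t => K₁ t s) (Icc a b \ {s}))
    (hderiv : ∀ᵐ s ∂μ, ∀ t ∈ Icc a b, t ≠ s →
      HasDerivWithinAt (fun τ => K₀ τ s) (K₁ t s) (Icc a b) t)
    (hΦ : Integrable Φ μ) (hdom : ∀ t ∈ Icc a b, ∀ᵐ s ∂μ, |K₁ t s| ≤ Φ s)
    (hg : AEStronglyMeasurable g μ) (hgC : ∀ᵐ s ∂μ, |g s| ≤ C) :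
    HasDerivWithinAt (fun t => ∫ s, K₀ t s * g s ∂μ) (∫ s, K₁ t₀ s * g s ∂μ) (Icc a b) t₀ := by
  have hdom' := ae_forall_abs_le_of_continuousOn_diff hab hK₁_cont hdom
  refine hasDerivWithinAt_integral_of_lipschitz ht₀ (fun t ht => (hK₀ t ht).mul_bdd hg hgC)
    (hΦ.mul_const C) ?_ ?_
  · filter_upwards [hK₀_cont, hderiv, hdom', hgC] with s hcont hds hbound hgs t ht
    calc |K₀ t s * g s - K₀ t₀ s * g s| = |K₀ t s - K₀ t₀ s| * |g s| := by
          rw [← abs_mul, sub_mul]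
      _ ≤ |K₀ t s - K₀ t₀ s| * C := mul_le_mul_of_nonneg_left hgs (abs_nonneg _)
      _ ≤ Φ s * |t - t₀| * C := mul_le_mul_of_nonneg_right
          (abs_sub_le_mul_of_hasDerivWithinAt_off_point hcont hds hbound ht₀ ht)
          ((abs_nonneg _).trans hgs)
      _ = Φ s * C * |t - t₀| := by ring
  · filter_upwards [hderiv, μ.ae_ne t₀] with s hds hs
    exact (hds t₀ ht₀ hs.symm).mul_const (g s)

lemma eqOn_iteratedDerivWithin_of_hasDerivWithinAt {s : Set ℝ} (hs : UniqueDiffOn ℝ s) {N : ℕ}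
    {u : ℝ → ℝ} {F : ℕ → ℝ → ℝ} (h0 : EqOn u (F 0) s)
    (hF : ∀ l < N, ∀ t ∈ s, HasDerivWithinAt (F l) (F (l + 1) t) s t) :
    ∀ l ≤ N, EqOn (iteratedDerivWithin l u s) (F l) s := by
  intro l
  induction l with
  | zero => intro _; rwa [iteratedDerivWithin_zero]
  | succ l ih =>
    intro hl t ht
    have ih' := ih (by omega)
    rw [iteratedDerivWithin_succ, derivWithin_congr ih' (ih' ht)]
    exact (hF l hl t ht).derivWithin (hs t ht)

lemma ContDiffOn.hasDerivWithinAt_iteratedDerivWithin {f : ℝ → ℝ} {s : Set ℝ} {N l : ℕ}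
    (hf : ContDiffOn ℝ N f s) (hs : UniqueDiffOn ℝ s) (hl : l < N) {t : ℝ} (ht : t ∈ s) :
    HasDerivWithinAt (iteratedDerivWithin l f s) (iteratedDerivWithin (l + 1) f s t) s t := by
  rw [iteratedDerivWithin_succ]
  exact ((hf.differentiableOn_iteratedDerivWithin (by exact_mod_cast hl) hs) t ht).hasDerivWithinAt

lemma abs_le_supIcc {g : ℝ → ℝ} (hg : ContinuousOn g (Icc 0 1)) {t : ℝ} (ht : t ∈ Icc (0:ℝ) 1) :
    |g t| ≤ supIcc g := by
  refine le_ciSup (f := fun x : Icc (0:ℝ) 1 => |g x|) ?_ ⟨t, ht⟩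
  obtain ⟨C, hC⟩ := (isCompact_Icc.image_of_continuousOn hg.abs).bddAbove
  exact ⟨C, by rintro _ ⟨x, rfl⟩; exact hC (mem_image_of_mem _ x.2)⟩

lemma intervalIntegral_zero_one_eq_integral_Icc (F : ℝ → ℝ) :
    ∫ s in (0:ℝ)..1, F s = ∫ s, F s ∂μ01 := by
  rw [intervalIntegral.integral_of_le zero_le_one, integral_Icc_eq_integral_Ioc]

lemma abs_integral_mul_le_mul_sSup {K : ℝ → ℝ → ℝ} {Φ g : ℝ → ℝ} {C : ℝ}
    (hK : ∀ t, AEStronglyMeasurable (K t) μ01) (hΦ : Integrable Φ μ01)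
    (hdom : ∀ t ∈ Icc (0:ℝ) 1, ∀ᵐ s ∂μ01, |K t s| ≤ Φ s) (hg : ∀ s ∈ Icc (0:ℝ) 1, |g s| ≤ C)
    {t : ℝ} (ht : t ∈ Icc (0:ℝ) 1) :
    |∫ s in (0:ℝ)..1, K t s * g s| ≤
      C * sSup ((fun t => ∫ s in (0:ℝ)..1, |K t s|) '' Icc 0 1) := by
  have hint : ∀ t ∈ Icc (0:ℝ) 1, Integrable (fun s => |K t s|) μ01 := fun t ht =>
    (hΦ.mono' (hK t) (by simpa using hdom t ht)).abs
  have hsup : ∫ s in (0:ℝ)..1, |K t s| ≤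
      sSup ((fun t => ∫ s in (0:ℝ)..1, |K t s|) '' Icc 0 1) := by
    refine le_csSup ⟨∫ s, Φ s ∂μ01, ?_⟩ ⟨t, ht, rfl⟩
    rintro _ ⟨t', ht', rfl⟩
    dsimp only
    rw [intervalIntegral_zero_one_eq_integral_Icc]
    exact integral_mono_ae (hint t' ht') hΦ (hdom t' ht')
  have hC : 0 ≤ C := (abs_nonneg _).trans (hg 0 ⟨le_rfl, zero_le_one⟩)
  calc |∫ s in (0:ℝ)..1, K t s * g s| ≤ ∫ s, C * |K t s| ∂μ01 := by
        rw [intervalIntegral_zero_one_eq_integral_Icc, ← Real.norm_eq_abs]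
        refine norm_integral_le_of_norm_le ((hint t ht).const_mul C) ?_
        filter_upwards [ae_restrict_mem measurableSet_Icc] with s hs
        rw [Real.norm_eq_abs, abs_mul, mul_comm]
        exact mul_le_mul_of_nonneg_right (hg s hs) (abs_nonneg _)
    _ ≤ C * sSup ((fun t => ∫ s in (0:ℝ)..1, |K t s|) '' Icc 0 1) := by
        rw [integral_const_mul, ← intervalIntegral_zero_one_eq_integral_Icc]
        exact mul_le_mul_of_nonneg_left hsup hC

section Cone

variable {n : ℕ} {m : Fin n → ℕ} {u : Fin n → ℝ → ℝ}

lemma abs_iteratedDerivWithin_le_normP {i : Fin n} (hu : ContDiffOn ℝ (m i) (u i) (Icc 0 1))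
    {l : ℕ} (hl : l ≤ m i) {t : ℝ} (ht : t ∈ Icc (0:ℝ) 1) :
    |iteratedDerivWithin l (u i) (Icc 0 1) t| ≤ normP m u :=
  calc |iteratedDerivWithin l (u i) (Icc 0 1) t|
      ≤ supIcc (iteratedDerivWithin l (u i) (Icc 0 1)) :=
        abs_le_supIcc (hu.continuousOn_iteratedDerivWithin (by exact_mod_cast hl)
          (uniqueDiffOn_Icc zero_lt_one)) ht
    _ ≤ normCm (m i) (u i) :=
        le_ciSup (f := fun j : Fin (m i + 1) => supIcc (iteratedDerivWithin j (u i) (Icc 0 1)))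
          (finite_range _).bddAbove ⟨l, Nat.lt_succ_of_le hl⟩
    _ ≤ normP m u := le_ciSup (f := fun i => normCm (m i) (u i)) (finite_range _).bddAbove i

lemma normP_le {C : ℝ} (hC : 0 ≤ C)
    (h : ∀ i, ∀ l ≤ m i, ∀ t ∈ Icc (0:ℝ) 1, |iteratedDerivWithin l (u i) (Icc 0 1) t| ≤ C) :
    normP m u ≤ C :=
  Real.iSup_le (fun i => Real.iSup_le (fun l => Real.iSup_le
    (fun t => h i l (Nat.lt_succ_iff.1 l.2) t t.2) hC) hC) hC

lemma jet_mem_Jset (hu : memP m u) {ρ : ℝ} (hρ : normP m u ≤ ρ) {s : ℝ}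
    (hs : s ∈ Icc (0:ℝ) 1) : jet m u s ∈ Jset m ρ := by
  have hbound : ∀ j (l : Fin (m j + 1)), |jet m u s j l| ≤ ρ := fun j l =>
    (abs_iteratedDerivWithin_le_normP (hu.1 j) (Nat.lt_succ_iff.1 l.2) hs).trans hρ
  refine fun j => ⟨⟨?_, (le_abs_self _).trans (hbound j 0)⟩, fun l _ => abs_le.1 (hbound j l)⟩
  simpa [jet] using hu.2 j s hs

lemma isCompact_Jset (ρ : ℝ) : IsCompact (Jset m ρ) := by
  have : Jset m ρ = univ.pi fun j => univ.pi fun l : Fin (m j + 1) =>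
      if l = 0 then Icc 0 ρ else Icc (-ρ) ρ := by
    ext x
    simp only [Jset, mem_ofPred_eq, mem_univ_pi]
    refine forall_congr' fun j => ⟨fun hx l => ?_, fun hx => ⟨by simpa using hx 0, fun l hl => ?_⟩⟩
    · split_ifs with hl
      · exact hl ▸ hx.1
      · exact hx.2 l hl
    · simpa [hl] using hx l
  rw [this]
  exact isCompact_univ_pi fun j => isCompact_univ_pi fun l => by split <;> exact isCompact_Icc

lemma continuousOn_jet (hu : memP m u) : ContinuousOn (jet m u) (Icc 0 1) :=
  continuousOn_pi.2 fun j => continuousOn_pi.2 fun l =>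
    (hu.1 j).continuousOn_iteratedDerivWithin (by exact_mod_cast Nat.lt_succ_iff.1 l.2)
      (uniqueDiffOn_Icc zero_lt_one)

lemma le_sSup_image_normP_eq {φ : (Fin n → ℝ → ℝ) → ℝ} {ρ : ℝ}
    (hφ : ∃ C, ∀ v, memP m v → normP m v ≤ ρ → φ v ≤ C) (hu : memP m u) (hρ : normP m u = ρ) :
    φ u ≤ sSup (φ '' {v | memP m v ∧ normP m v = ρ}) := by
  obtain ⟨C, hC⟩ := hφ
  exact le_csSup ⟨C, by rintro _ ⟨v, hv, rfl⟩; exact hC v hv.1 hv.2.le⟩ ⟨u, ⟨hu, hρ⟩, rfl⟩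


variable {F : ℝ → ((j : Fin n) → Fin (m j + 1) → ℝ) → ℝ}
  (hF : ContinuousOn (fun q : ℝ × ((j : Fin n) → Fin (m j + 1) → ℝ) => F q.1 q.2)
    (Icc (0:ℝ) 1 ×ˢ {x | ∀ j, 0 ≤ x j 0}))
include hF

lemma continuousOn_comp_jet (hu : memP m u) : ContinuousOn (fun s => F s (jet m u s)) (Icc 0 1) :=
  hF.comp (continuousOn_id.prodMk (continuousOn_jet hu))
    fun s hs => ⟨hs, fun j => by simpa [jet] using hu.2 j s hs⟩

lemma abs_comp_jet_le_sSup (hF₀ : ∀ t ∈ Icc (0:ℝ) 1, ∀ x, (∀ j, 0 ≤ x j 0) → 0 ≤ F t x)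
    (hu : memP m u) {ρ : ℝ} (hρ : normP m u ≤ ρ) {s : ℝ} (hs : s ∈ Icc (0:ℝ) 1) :
    |F s (jet m u s)| ≤
      sSup ((fun q : ℝ × ((j : Fin n) → Fin (m j + 1) → ℝ) => F q.1 q.2) '' (Icc 0 1 ×ˢ Jset m ρ)) := by
  have hjet := jet_mem_Jset hu hρ hs
  have hsub : Icc (0:ℝ) 1 ×ˢ Jset m ρ ⊆ Icc (0:ℝ) 1 ×ˢ {x | ∀ j, 0 ≤ x j 0} :=
    prod_mono subset_rfl fun x hx j => (hx j).1.1
  rw [abs_of_nonneg (hF₀ s hs _ fun j => (hjet j).1.1)]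
  exact le_csSup ((isCompact_Icc.prod (isCompact_Jset ρ)).image_of_continuousOn
    (hF.mono hsub)).bddAbove ⟨(s, jet m u s), ⟨hs, hjet⟩, rfl⟩


end Cone

/-- Conditions (C₁)–(C₃) on one kernel, `K l` standing for `∂ˡk/∂tˡ`. -/
structure IsRegularKernel (N : ℕ) (K : ℕ → ℝ → ℝ → ℝ) (Φ : ℕ → ℝ → ℝ) : Prop where
  measurable : ∀ l ≤ N, Measurable (Function.uncurry (K l))
  continuousOn : ∀ l < N, ∀ᵐ s ∂μ01, ContinuousOn (fun t => K l t s) (Icc 0 1)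
  continuousOn_top : ∀ᵐ s ∂μ01, ContinuousOn (fun t => K N t s) (Icc 0 1 \ {s})
  integrableOn : ∀ l ≤ N, IntegrableOn (Φ l) (Icc 0 1)
  abs_le : ∀ l ≤ N, ∀ t ∈ Icc (0:ℝ) 1, ∀ᵐ s ∂μ01, |K l t s| ≤ Φ l s
  hasDerivWithinAt : ∀ l, l + 1 < N → ∀ s ∈ Icc (0:ℝ) 1, ∀ t ∈ Icc (0:ℝ) 1,
    HasDerivWithinAt (fun τ => K l τ s) (K (l + 1) t s) (Icc 0 1) t
  hasDerivWithinAt_top : ∀ s ∈ Icc (0:ℝ) 1, ∀ t ∈ Icc (0:ℝ) 1, t ≠ s →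
    HasDerivWithinAt (fun τ => K (N - 1) τ s) (K N t s) (Icc 0 1) t

namespace IsRegularKernel

variable {N : ℕ} {K : ℕ → ℝ → ℝ → ℝ} {Φ : ℕ → ℝ → ℝ} (hK : IsRegularKernel N K Φ)
  {g : ℝ → ℝ} {C : ℝ}
include hK

lemma integrable {l : ℕ} (hl : l ≤ N) {t : ℝ} (ht : t ∈ Icc (0:ℝ) 1) : Integrable (K l t) μ01 :=
  (hK.integrableOn l hl).mono' ((hK.measurable l hl).comp measurable_prodMk_left).aestronglyMeasurable
    (by simpa using hK.abs_le l hl t ht)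

lemma hasDerivWithinAt_integral_mul (hg : AEStronglyMeasurable g μ01)
    (hgC : ∀ s ∈ Icc (0:ℝ) 1, |g s| ≤ C) {l : ℕ} (hl : l < N) {t : ℝ} (ht : t ∈ Icc (0:ℝ) 1) :
    HasDerivWithinAt (fun t => ∫ s in (0:ℝ)..1, K l t s * g s)
      (∫ s in (0:ℝ)..1, K (l + 1) t s * g s) (Icc 0 1) t := by
  simp only [intervalIntegral_zero_one_eq_integral_Icc]
  have hcont : ∀ᵐ s ∂μ01, ContinuousOn (fun t => K (l + 1) t s) (Icc 0 1 \ {s}) := by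
    rcases (Nat.succ_le_of_lt hl).lt_or_eq with hlt | rfl
    · filter_upwards [hK.continuousOn (l + 1) hlt] with s hs using hs.mono sdiff_subset
    · exact hK.continuousOn_top
  have hderiv : ∀ᵐ s ∂μ01, ∀ t ∈ Icc (0:ℝ) 1, t ≠ s →
      HasDerivWithinAt (fun τ => K l τ s) (K (l + 1) t s) (Icc 0 1) t := by
    filter_upwards [ae_restrict_mem measurableSet_Icc] with s hs t ht hts
    rcases (Nat.succ_le_of_lt hl).lt_or_eq with hlt | rfl
    · exact hK.hasDerivWithinAt l hlt s hs t ht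
    · exact hK.hasDerivWithinAt_top s hs t ht hts
  exact hasDerivWithinAt_integral_mul_of_hasDerivWithinAt_off_diag zero_lt_one ht
    (fun t ht => hK.integrable hl.le ht) (hK.continuousOn l hl) hcont hderiv
    (hK.integrableOn (l + 1) hl) (hK.abs_le (l + 1) hl) hg
    (by filter_upwards [ae_restrict_mem measurableSet_Icc] with s hs using hgC s hs)

lemma abs_integral_mul_le (hK₀ : ∀ t ∈ Icc (0:ℝ) 1, ∀ s ∈ Icc (0:ℝ) 1, 0 ≤ K 0 t s)
    (hgC : ∀ s ∈ Icc (0:ℝ) 1, |g s| ≤ C) {l : ℕ} (hl : l ≤ N) {t : ℝ} (ht : t ∈ Icc (0:ℝ) 1) :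
    |∫ s in (0:ℝ)..1, K l t s * g s| ≤
      C * sSup ((fun t => ∫ s in (0:ℝ)..1, if l = 0 then K 0 t s else |K l t s|) '' Icc 0 1) := by
  have hK_abs : EqOn (fun t => ∫ s in (0:ℝ)..1, if l = 0 then K 0 t s else |K l t s|)
      (fun t => ∫ s in (0:ℝ)..1, |K l t s|) (Icc 0 1) := fun t ht =>
    intervalIntegral.integral_congr fun s hs => by
      rw [uIcc_of_le zero_le_one] at hs
      rcases eq_or_ne l 0 with rfl | hl0
      · simp [abs_of_nonneg (hK₀ t ht s hs)]
      · simp [hl0]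
  rw [hK_abs.image_eq]
  exact abs_integral_mul_le_mul_sSup (fun t => ((hK.measurable l hl).comp
    measurable_prodMk_left).aestronglyMeasurable) (hK.integrableOn l hl) (hK.abs_le l hl) hgC ht

variable {ι : Type*} [Fintype ι] {γ : ι → ℝ → ℝ} {lam : ℝ} {η c : ι → ℝ}

lemma mul_iteratedDerivWithin_eq (hg : AEStronglyMeasurable g μ01)
    (hgC : ∀ s ∈ Icc (0:ℝ) 1, |g s| ≤ C) (hγ : ∀ j, ContDiffOn ℝ N (γ j) (Icc 0 1))
    {v : ℝ → ℝ} {σ : ℝ} (hσ : σ ≠ 0)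
    (heq : ∀ t ∈ Icc (0:ℝ) 1,
      σ * v t = lam * (∫ s in (0:ℝ)..1, K 0 t s * g s) + ∑ j, η j * γ j t * c j)
    {l : ℕ} (hl : l ≤ N) {t : ℝ} (ht : t ∈ Icc (0:ℝ) 1) :
    σ * iteratedDerivWithin l v (Icc 0 1) t = lam * (∫ s in (0:ℝ)..1, K l t s * g s) +
      ∑ j, η j * iteratedDerivWithin l (γ j) (Icc 0 1) t * c j := by
  have hU : UniqueDiffOn ℝ (Icc (0:ℝ) 1) := uniqueDiffOn_Icc zero_lt_one
  have key := eqOn_iteratedDerivWithin_of_hasDerivWithinAt hU (N := N)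
    (F := fun l t => σ⁻¹ * (lam * (∫ s in (0:ℝ)..1, K l t s * g s) +
      ∑ j, η j * iteratedDerivWithin l (γ j) (Icc 0 1) t * c j))
    (fun t ht => by simp only [iteratedDerivWithin_zero]; rw [← heq t ht, inv_mul_cancel_left₀ hσ])
    (fun l hl t ht => (((hK.hasDerivWithinAt_integral_mul hg hgC hl ht).const_mul lam).add
      (HasDerivWithinAt.fun_sum fun j _ =>
        (((hγ j).hasDerivWithinAt_iteratedDerivWithin hU hl ht).const_mul (η j)).mul_const
          (c j))).const_mul σ⁻¹) l hl ht
  rw [key, mul_inv_cancel_left₀ hσ]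

lemma abs_integral_add_sum_le (hK₀ : ∀ t ∈ Icc (0:ℝ) 1, ∀ s ∈ Icc (0:ℝ) 1, 0 ≤ K 0 t s)
    (hgC : ∀ s ∈ Icc (0:ℝ) 1, |g s| ≤ C) {l : ℕ} (hl : l ≤ N)
    (hγ : ∀ j, ContinuousOn (iteratedDerivWithin l (γ j) (Icc 0 1)) (Icc 0 1))
    (hlam : 0 ≤ lam) (hη : ∀ j, 0 ≤ η j) (hc : ∀ j, 0 ≤ c j) {H : ι → ℝ} (hcH : ∀ j, c j ≤ H j)
    {t : ℝ} (ht : t ∈ Icc (0:ℝ) 1) :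
    |lam * (∫ s in (0:ℝ)..1, K l t s * g s) +
        ∑ j, η j * iteratedDerivWithin l (γ j) (Icc 0 1) t * c j| ≤
      lam * C * sSup ((fun t => ∫ s in (0:ℝ)..1, if l = 0 then K 0 t s else |K l t s|) '' Icc 0 1) +
        ∑ j, η j * supIcc (iteratedDerivWithin l (γ j) (Icc 0 1)) * H j := by
  refine (abs_add_le _ _).trans (add_le_add ?_ ?_)
  · rw [abs_mul, abs_of_nonneg hlam, mul_assoc]
    exact mul_le_mul_of_nonneg_left (hK.abs_integral_mul_le hK₀ hgC hl ht) hlam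
  · refine (Finset.abs_sum_le_sum_abs _ _).trans (Finset.sum_le_sum fun j _ => ?_)
    have hγj := abs_le_supIcc (hγ j) ht
    rw [abs_mul, abs_mul, abs_of_nonneg (hη j), abs_of_nonneg (hc j)]
    exact mul_le_mul (mul_le_mul_of_nonneg_left hγj (hη j)) (hcH j) (hc j)
      (mul_nonneg (hη j) ((abs_nonneg _).trans hγj))

lemma abs_mul_iteratedDerivWithin_le (hK₀ : ∀ t ∈ Icc (0:ℝ) 1, ∀ s ∈ Icc (0:ℝ) 1, 0 ≤ K 0 t s)
    (hg : ContinuousOn g (Icc 0 1)) (hgC : ∀ s ∈ Icc (0:ℝ) 1, |g s| ≤ C)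
    (hγ : ∀ j, ContDiffOn ℝ N (γ j) (Icc 0 1)) (hlam : 0 ≤ lam) (hη : ∀ j, 0 ≤ η j)
    (hc : ∀ j, 0 ≤ c j) {H : ι → ℝ} (hcH : ∀ j, c j ≤ H j) {v : ℝ → ℝ} {σ : ℝ} (hσ : σ ≠ 0)
    (heq : ∀ t ∈ Icc (0:ℝ) 1,
      σ * v t = lam * (∫ s in (0:ℝ)..1, K 0 t s * g s) + ∑ j, η j * γ j t * c j)
    {l : ℕ} (hl : l ≤ N) {t : ℝ} (ht : t ∈ Icc (0:ℝ) 1) :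
    |σ * iteratedDerivWithin l v (Icc 0 1) t| ≤
      lam * C * sSup ((fun t => ∫ s in (0:ℝ)..1, if l = 0 then K 0 t s else |K l t s|) '' Icc 0 1) +
        ∑ j, η j * supIcc (iteratedDerivWithin l (γ j) (Icc 0 1)) * H j := by
  rw [hK.mul_iteratedDerivWithin_eq (hg.aestronglyMeasurable measurableSet_Icc) hgC hγ hσ heq hl ht]
  exact hK.abs_integral_add_sum_le hK₀ hgC hl (fun j => (hγ j).continuousOn_iteratedDerivWithin
    (by exact_mod_cast hl) (uniqueDiffOn_Icc zero_lt_one)) hlam hη hc hcH ht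

end IsRegularKernel

theorem stmt_2_general
    (n : ℕ) (m p : Fin n → ℕ)
    -- `dk i l t s` denotes `∂ˡk_i/∂tˡ(t,s)`; in particular `dk i 0` is the kernel `k_i`
    (dk : (i : Fin n) → ℕ → ℝ → ℝ → ℝ)
    -- (C₁): `k_i ≥ 0`, measurable, continuous in `t` for a.e. `s`, dominated by `Φ_{i0} ∈ L¹`
    -- (C₂)-(C₃): similarly for the derivatives, the `m_i`-th one off the diagonal only
    (hk_nonneg : ∀ i, ∀ t ∈ Set.Icc (0:ℝ) 1, ∀ s ∈ Set.Icc (0:ℝ) 1, 0 ≤ dk i 0 t s)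
    (hk_meas : ∀ i, ∀ l ≤ m i, Measurable (Function.uncurry (dk i l)))
    (hk_cont : ∀ i, ∀ l < m i, ∀ᵐ s ∂(volume.restrict (Set.Icc (0:ℝ) 1)),
      ContinuousOn (fun t => dk i l t s) (Set.Icc (0:ℝ) 1))
    (hk_cont_top : ∀ i, ∀ᵐ s ∂(volume.restrict (Set.Icc (0:ℝ) 1)),
      ContinuousOn (fun t => dk i (m i) t s) (Set.Icc (0:ℝ) 1 \ {s}))
    (Φ : (i : Fin n) → ℕ → ℝ → ℝ)
    (hΦ_int : ∀ i, ∀ l ≤ m i, IntegrableOn (Φ i l) (Set.Icc (0:ℝ) 1))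
    (hΦ_dom : ∀ i, ∀ l ≤ m i, ∀ t ∈ Set.Icc (0:ℝ) 1,
      ∀ᵐ s ∂(volume.restrict (Set.Icc (0:ℝ) 1)), |dk i l t s| ≤ Φ i l s)
    (hk_deriv : ∀ i, ∀ l, l + 1 < m i → ∀ s ∈ Set.Icc (0:ℝ) 1, ∀ t ∈ Set.Icc (0:ℝ) 1,
      HasDerivWithinAt (fun τ => dk i l τ s) (dk i (l + 1) t s) (Set.Icc (0:ℝ) 1) t)
    (hk_deriv_top : ∀ i, ∀ s ∈ Set.Icc (0:ℝ) 1, ∀ t ∈ Set.Icc (0:ℝ) 1, t ≠ s →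
      HasDerivWithinAt (fun τ => dk i (m i - 1) τ s) (dk i (m i) t s) (Set.Icc (0:ℝ) 1) t)
    -- (C₄): the nonlinearities `f_i` are continuous and nonnegative
    (f : (i : Fin n) → ℝ → ((j : Fin n) → Fin (m j + 1) → ℝ) → ℝ)
    (hf_cont : ∀ i, ContinuousOn
      (fun q : ℝ × ((j : Fin n) → Fin (m j + 1) → ℝ) => f i q.1 q.2)
      (Set.Icc (0:ℝ) 1 ×ˢ {x : (j : Fin n) → Fin (m j + 1) → ℝ | ∀ j, 0 ≤ x j 0}))
    (hf_nonneg : ∀ i, ∀ t ∈ Set.Icc (0:ℝ) 1,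
      ∀ x : (j : Fin n) → Fin (m j + 1) → ℝ, (∀ j, 0 ≤ x j 0) → 0 ≤ f i t x)
    -- (C₅): `γ_{ij} ∈ C^{m_i}[0,1]` nonnegative; (C₆): nonnegative parameters
    (γ : (i : Fin n) → Fin (p i) → ℝ → ℝ)
    (hγ_smooth : ∀ i j, ContDiffOn ℝ (m i) (γ i j) (Set.Icc 0 1))
    (lam : Fin n → ℝ) (η : (i : Fin n) → Fin (p i) → ℝ)
    (hlam : ∀ i, 0 ≤ lam i) (hη : ∀ i j, 0 ≤ η i j)
    -- (C₈): the functionals `h_{ij} : P → [0,∞)` are continuous and map bounded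
    -- sets into bounded sets
    (h : (i : Fin n) → Fin (p i) → (Fin n → ℝ → ℝ) → ℝ)
    (hh_nonneg : ∀ i j, ∀ u, memP m u → 0 ≤ h i j u)
    (hh_bdd : ∀ i j, ∀ B : ℝ, ∃ C : ℝ, ∀ u, memP m u → normP m u ≤ B → h i j u ≤ C)
    (R : ℝ) (hR : 0 < R)
    (hidx1 : ∀ i, ∀ l ≤ m i,
      lam i * (sSup ((fun q : ℝ × ((j : Fin n) → Fin (m j + 1) → ℝ) => f i q.1 q.2) ''
        (Set.Icc (0:ℝ) 1 ×ˢ Jset m R))) *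
        (sSup ((fun t : ℝ => ∫ s in (0:ℝ)..1,
          if l = 0 then dk i 0 t s else |dk i l t s|) '' Set.Icc (0:ℝ) 1)) +
      ∑ j, η i j * (supIcc (iteratedDerivWithin l (γ i j) (Set.Icc 0 1))) *
        (sSup (h i j '' {u : Fin n → ℝ → ℝ | memP m u ∧ normP m u = R})) ≤ R) :
    (∀ u : Fin n → ℝ → ℝ, memP m u → normP m u = R → ∀ σ : ℝ, 0 < σ →
      (∀ i, ∀ t ∈ Set.Icc (0:ℝ) 1,
        σ * u i t = lam i * (∫ s in (0:ℝ)..1, dk i 0 t s * f i s (jet m u s)) + ∑ j, η i j * γ i j t * h i j u) →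
      σ ≤ 1) ∧
    (∀ u : Fin n → ℝ → ℝ, memP m u → normP m u = R → ∀ σ : ℝ, 1 < σ →
      ¬ (∀ i, ∀ t ∈ Set.Icc (0:ℝ) 1,
        σ * u i t = lam i * (∫ s in (0:ℝ)..1, dk i 0 t s * f i s (jet m u s)) + ∑ j, η i j * γ i j t * h i j u)) := by
  refine (fun hσ_le => ⟨hσ_le, fun u hu hnorm σ hσ heq =>
    hσ.not_ge (hσ_le u hu hnorm σ (one_pos.trans hσ) heq)⟩) ?_
  intro u hu hnorm σ hσ heq
  have hK : ∀ i, IsRegularKernel (m i) (dk i) (Φ i) := fun i =>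
    ⟨hk_meas i, hk_cont i, hk_cont_top i, hΦ_int i, hΦ_dom i, hk_deriv i, hk_deriv_top i⟩
  have hbound : ∀ i, ∀ l ≤ m i, ∀ t ∈ Icc (0:ℝ) 1,
      |σ * iteratedDerivWithin l (u i) (Icc 0 1) t| ≤ R := fun i l hl t ht =>
    ((hK i).abs_mul_iteratedDerivWithin_le (hk_nonneg i) (continuousOn_comp_jet (hf_cont i) hu)
      (fun s hs => abs_comp_jet_le_sSup (hf_cont i) (hf_nonneg i) hu hnorm.le hs)
      (hγ_smooth i) (hlam i) (hη i) (fun j => hh_nonneg i j u hu)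
      (fun j => le_sSup_image_normP_eq (hh_bdd i j R) hu hnorm) hσ.ne' (heq i) hl ht).trans
      (hidx1 i l hl)
  have hR_le : R ≤ R / σ := hnorm.symm.trans_le <|
    normP_le (div_nonneg hR.le hσ.le) fun i l hl t ht => by
      have := hbound i l hl t ht
      rw [abs_mul, abs_of_pos hσ] at this
      rw [le_div_iff₀ hσ]
      linarith
  rw [le_div_iff₀ hσ] at hR_le
  exact (mul_le_iff_le_one_right hR).1 hR_le

/-- if `R > 0` satisfies the growth condition `(idx1)`, then for
`u ∈ P` with `‖u‖ = R`, `σ u = T u` with `σ > 0` forces `σ ≤ 1`; in particular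
`σ u ≠ T u` for all such `u` and all `σ > 1`. -/
theorem stmt_2
    (n : ℕ) (hn : 0 < n) (m p : Fin n → ℕ)
    (hm : ∀ i, 1 ≤ m i) (hp : ∀ i, 1 ≤ p i)
    -- `dk i l t s` denotes `∂ˡk_i/∂tˡ(t,s)`; in particular `dk i 0` is the kernel `k_i`
    (dk : (i : Fin n) → ℕ → ℝ → ℝ → ℝ)
    -- (C₁): `k_i ≥ 0`, measurable, continuous in `t` for a.e. `s`, dominated by `Φ_{i0} ∈ L¹`
    -- (C₂)-(C₃): similarly for the derivatives, the `m_i`-th one off the diagonal only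
    (hk_nonneg : ∀ i, ∀ t ∈ Set.Icc (0:ℝ) 1, ∀ s ∈ Set.Icc (0:ℝ) 1, 0 ≤ dk i 0 t s)
    (hk_meas : ∀ i, ∀ l ≤ m i, Measurable (Function.uncurry (dk i l)))
    (hk_cont : ∀ i, ∀ l < m i, ∀ᵐ s ∂(volume.restrict (Set.Icc (0:ℝ) 1)),
      ContinuousOn (fun t => dk i l t s) (Set.Icc (0:ℝ) 1))
    (hk_cont_top : ∀ i, ∀ᵐ s ∂(volume.restrict (Set.Icc (0:ℝ) 1)),
      ContinuousOn (fun t => dk i (m i) t s) (Set.Icc (0:ℝ) 1 \ {s}))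
    (Φ : (i : Fin n) → ℕ → ℝ → ℝ)
    (hΦ_int : ∀ i, ∀ l ≤ m i, IntegrableOn (Φ i l) (Set.Icc (0:ℝ) 1))
    (hΦ_dom : ∀ i, ∀ l ≤ m i, ∀ t ∈ Set.Icc (0:ℝ) 1,
      ∀ᵐ s ∂(volume.restrict (Set.Icc (0:ℝ) 1)), |dk i l t s| ≤ Φ i l s)
    (hk_deriv : ∀ i, ∀ l, l + 1 < m i → ∀ s ∈ Set.Icc (0:ℝ) 1, ∀ t ∈ Set.Icc (0:ℝ) 1,
      HasDerivWithinAt (fun τ => dk i l τ s) (dk i (l + 1) t s) (Set.Icc (0:ℝ) 1) t)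
    (hk_deriv_top : ∀ i, ∀ s ∈ Set.Icc (0:ℝ) 1, ∀ t ∈ Set.Icc (0:ℝ) 1, t ≠ s →
      HasDerivWithinAt (fun τ => dk i (m i - 1) τ s) (dk i (m i) t s) (Set.Icc (0:ℝ) 1) t)
    -- (C₄): the nonlinearities `f_i` are continuous and nonnegative
    (f : (i : Fin n) → ℝ → ((j : Fin n) → Fin (m j + 1) → ℝ) → ℝ)
    (hf_cont : ∀ i, ContinuousOn
      (fun q : ℝ × ((j : Fin n) → Fin (m j + 1) → ℝ) => f i q.1 q.2)
      (Set.Icc (0:ℝ) 1 ×ˢ {x : (j : Fin n) → Fin (m j + 1) → ℝ | ∀ j, 0 ≤ x j 0}))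
    (hf_nonneg : ∀ i, ∀ t ∈ Set.Icc (0:ℝ) 1,
      ∀ x : (j : Fin n) → Fin (m j + 1) → ℝ, (∀ j, 0 ≤ x j 0) → 0 ≤ f i t x)
    -- (C₅): `γ_{ij} ∈ C^{m_i}[0,1]` nonnegative; (C₆): nonnegative parameters
    (γ : (i : Fin n) → Fin (p i) → ℝ → ℝ)
    (hγ_smooth : ∀ i j, ContDiffOn ℝ (m i) (γ i j) (Set.Icc 0 1))
    (hγ_nonneg : ∀ i j, ∀ t ∈ Set.Icc (0:ℝ) 1, 0 ≤ γ i j t)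
    (lam : Fin n → ℝ) (η : (i : Fin n) → Fin (p i) → ℝ)
    (hlam : ∀ i, 0 ≤ lam i) (hη : ∀ i j, 0 ≤ η i j)
    -- (C₈): the functionals `h_{ij} : P → [0,∞)` are continuous and map bounded
    -- sets into bounded sets
    (h : (i : Fin n) → Fin (p i) → (Fin n → ℝ → ℝ) → ℝ)
    (hh_nonneg : ∀ i j, ∀ u, memP m u → 0 ≤ h i j u)
    (hh_cont : ∀ i j, ∀ u, memP m u → ∀ ε > (0:ℝ), ∃ δ' > (0:ℝ), ∀ v, memP m v →
      normP m (fun i' t => u i' t - v i' t) < δ' → |h i j u - h i j v| < ε)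
    (hh_bdd : ∀ i j, ∀ B : ℝ, ∃ C : ℝ, ∀ u, memP m u → normP m u ≤ B → h i j u ≤ C)
    (R : ℝ) (hR : 0 < R)
    (hidx1 : ∀ i, ∀ l ≤ m i,
      lam i * (sSup ((fun q : ℝ × ((j : Fin n) → Fin (m j + 1) → ℝ) => f i q.1 q.2) ''
        (Set.Icc (0:ℝ) 1 ×ˢ Jset m R))) *
        (sSup ((fun t : ℝ => ∫ s in (0:ℝ)..1,
          if l = 0 then dk i 0 t s else |dk i l t s|) '' Set.Icc (0:ℝ) 1)) +
      ∑ j, η i j * (supIcc (iteratedDerivWithin l (γ i j) (Set.Icc 0 1))) *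
        (sSup (h i j '' {u : Fin n → ℝ → ℝ | memP m u ∧ normP m u = R})) ≤ R) :
    (∀ u : Fin n → ℝ → ℝ, memP m u → normP m u = R → ∀ σ : ℝ, 0 < σ →
      (∀ i, ∀ t ∈ Set.Icc (0:ℝ) 1,
        σ * u i t = lam i * (∫ s in (0:ℝ)..1, dk i 0 t s * f i s (jet m u s)) + ∑ j, η i j * γ i j t * h i j u) →
      σ ≤ 1) ∧
    (∀ u : Fin n → ℝ → ℝ, memP m u → normP m u = R → ∀ σ : ℝ, 1 < σ →
      ¬ (∀ i, ∀ t ∈ Set.Icc (0:ℝ) 1,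
        σ * u i t = lam i * (∫ s in (0:ℝ)..1, dk i 0 t s * f i s (jet m u s)) + ∑ j, η i j * γ i j t * h i j u)) :=
  stmt_2_general n m p dk hk_nonneg hk_meas hk_cont hk_cont_top Φ hΦ_int hΦ_dom hk_deriv
    hk_deriv_top f hf_cont hf_nonneg γ hγ_smooth lam η hlam hη h hh_nonneg hh_bdd R hR hidx1
end

section
/- Let k₂(t,s) := (1/6)·s(1−t)(2t−s²−t²) for s ≤ t and k₂(t,s) := (1/6)·t(1−s)(2s−t²−s²) for s > t. Define Φ₂₀(s) := (√3/27)·s·(1−s²)^{3/2} for 0 ≤ s ≤ 1/2 and Φ₂₀(s) := (√3/27)·(1−s)·s^{3/2}·(2−s)^{3/2} for 1/2 < s ≤ 1. Then 0 ≤ k₂(t,s) ≤ Φ₂₀(s) for all t, s ∈ [0,1]. -/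
/-!
For `s ≤ t` one has `6 k₂(t,s) = s · u (a² - u²)` with `u = 1 - t` and `a = √(1 - s²)`, and
`u (a² - u²) ≤ 2√3/9 · a³` for `u ≥ 0` (the maximum is at `u = a/√3`); this is the first branch of
`Φ₂₀`. For `t < s ≤ 1/2`, `k₂(·,s)` increases on `[0,s]`, so the diagonal value is the worst case.
The beam is symmetric, `k₂(1-t,1-s) = k₂(t,s)`, and the second branch of `Φ₂₀` is the first one
at `1 - s`, which settles `s > 1/2`.
-/

open Set

/-- The Green's function of `u'''' = g` on `(0,1)` with
`u(0) = u(1) = u''(0) = u''(1) = 0` (simply supported beam). -/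
noncomputable def k2 (t s : ℝ) : ℝ :=
  if s ≤ t then (1 / 6) * (s * (1 - t) * (2 * t - s ^ 2 - t ^ 2))
  else (1 / 6) * (t * (1 - s) * (2 * s - t ^ 2 - s ^ 2))

/-- The dominating function `Φ₂₀`. -/
noncomputable def Phi20 (s : ℝ) : ℝ :=
  if s ≤ 1 / 2 then (Real.sqrt 3 / 27) * s * (1 - s ^ 2) ^ ((3:ℝ) / 2)
  else (Real.sqrt 3 / 27) * (1 - s) * s ^ ((3:ℝ) / 2) * (2 - s) ^ ((3:ℝ) / 2)

noncomputable def phi20Left (s : ℝ) : ℝ :=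
  (Real.sqrt 3 / 27) * s * (1 - s ^ 2) ^ ((3:ℝ) / 2)

lemma mul_sq_sub_sq_le {u a : ℝ} (hu : 0 ≤ u) (ha : 0 ≤ a) :
    u * (a ^ 2 - u ^ 2) ≤ 2 * Real.sqrt 3 / 9 * a ^ 3 := by
  have h3 : Real.sqrt 3 ^ 2 = 3 := Real.sq_sqrt (by norm_num)
  have hsq : 0 ≤ (3 * u - Real.sqrt 3 * a) ^ 2 * (3 * u + 2 * Real.sqrt 3 * a) := by positivity
  have hexp : (3 * u - Real.sqrt 3 * a) ^ 2 * (3 * u + 2 * Real.sqrt 3 * a)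
      = 27 * u ^ 3 - 9 * Real.sqrt 3 ^ 2 * u * a ^ 2 + 2 * Real.sqrt 3 ^ 2 * Real.sqrt 3 * a ^ 3 := by
    ring
  rw [h3] at hexp
  linarith

lemma Phi20_eq {s : ℝ} (hs : s ∈ Icc (0:ℝ) 1) :
    Phi20 s = if s ≤ 1 / 2 then phi20Left s else phi20Left (1 - s) := by
  obtain ⟨hs0, hs1⟩ := hs
  unfold Phi20 phi20Left
  split_ifs
  · rfl
  · rw [mul_assoc _ (s ^ _), ← Real.mul_rpow hs0 (by linarith)]
    ring_nf

lemma k2_one_sub_one_sub (t s : ℝ) : k2 (1 - t) (1 - s) = k2 t s := by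
  unfold k2
  split_ifs with h h' h'
  · obtain rfl : s = t := by linarith
    ring
  · ring
  · ring
  · linarith

lemma k2_nonneg_of_le {t s : ℝ} (hs : 0 ≤ s) (ht : t ≤ 1) (hst : s ≤ t) : 0 ≤ k2 t s := by
  rw [k2, if_pos hst]
  have : 0 ≤ 2 * t - s ^ 2 - t ^ 2 := by nlinarith
  have : 0 ≤ s * (1 - t) := mul_nonneg hs (by linarith)
  positivity

lemma k2_nonneg {t s : ℝ} (ht : t ∈ Icc (0:ℝ) 1) (hs : s ∈ Icc (0:ℝ) 1) : 0 ≤ k2 t s := by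
  rcases le_total s t with hst | hts
  · exact k2_nonneg_of_le hs.1 ht.2 hst
  · rw [← k2_one_sub_one_sub]
    exact k2_nonneg_of_le (Icc.mem_iff_one_sub_mem.mp hs).1 (Icc.mem_iff_one_sub_mem.mp ht).2
      (by linarith)

lemma k2_le_phi20Left_of_le {t s : ℝ} (hs : 0 ≤ s) (ht : t ≤ 1) (hst : s ≤ t) :
    k2 t s ≤ phi20Left s := by
  have h1s : 0 ≤ 1 - s ^ 2 := by nlinarith
  set a := Real.sqrt (1 - s ^ 2)
  have ha : a ^ 2 = 1 - s ^ 2 := Real.sq_sqrt h1s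
  have hcubic := mul_sq_sub_sq_le (u := 1 - t) (by linarith) (Real.sqrt_nonneg (1 - s ^ 2))
  rw [k2, if_pos hst, phi20Left, Real.rpow_div_two_eq_sqrt _ h1s, Real.rpow_ofNat]
  calc 1 / 6 * (s * (1 - t) * (2 * t - s ^ 2 - t ^ 2))
      = s / 6 * ((1 - t) * (a ^ 2 - (1 - t) ^ 2)) := by rw [ha]; ring
    _ ≤ s / 6 * (2 * Real.sqrt 3 / 9 * a ^ 3) := by gcongr
    _ = Real.sqrt 3 / 27 * s * a ^ 3 := by ring

lemma k2_le_k2_self_of_le_half {t s : ℝ} (ht : 0 ≤ t) (hts : t < s) (hs : s ≤ 1 / 2) :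
    k2 t s ≤ k2 s s := by
  rw [k2, k2, if_neg (not_le.2 hts), if_pos le_rfl]
  have hfac : 0 ≤ 2 * s - 2 * s ^ 2 - s * t - t ^ 2 := by nlinarith
  have hts' : 0 ≤ s - t := by linarith
  have hs' : 0 ≤ 1 - s := by linarith
  have hdiff : s * (1 - s) * (2 * s - s ^ 2 - s ^ 2) - t * (1 - s) * (2 * s - t ^ 2 - s ^ 2)
      = (1 - s) * ((s - t) * (2 * s - 2 * s ^ 2 - s * t - t ^ 2)) := by ring
  have : 0 ≤ (1 - s) * ((s - t) * (2 * s - 2 * s ^ 2 - s * t - t ^ 2)) := by positivity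
  linarith

lemma k2_le_phi20Left {t s : ℝ} (ht : t ∈ Icc (0:ℝ) 1) (hs0 : 0 ≤ s) (hs : s ≤ 1 / 2) :
    k2 t s ≤ phi20Left s := by
  rcases le_or_gt s t with hst | hts
  · exact k2_le_phi20Left_of_le hs0 ht.2 hst
  · calc k2 t s ≤ k2 s s := k2_le_k2_self_of_le_half ht.1 hts hs
      _ ≤ phi20Left s := k2_le_phi20Left_of_le hs0 (by linarith) le_rfl

/-- `0 ≤ k₂(t,s) ≤ Φ₂₀(s)` for all `t, s ∈ [0,1]`. -/
theorem stmt_11 :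
    ∀ t ∈ Set.Icc (0:ℝ) 1, ∀ s ∈ Set.Icc (0:ℝ) 1,
      0 ≤ k2 t s ∧ k2 t s ≤ Phi20 s := by
  intro t ht s hs
  refine ⟨k2_nonneg ht hs, ?_⟩
  rw [Phi20_eq hs]
  split_ifs with hhalf
  · exact k2_le_phi20Left ht hs.1 hhalf
  · rw [← k2_one_sub_one_sub]
    exact k2_le_phi20Left (Icc.mem_iff_one_sub_mem.mp ht) (Icc.mem_iff_one_sub_mem.mp hs).1
      (by linarith)
end
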